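/- arXiv:1011.0108 — 5 statements merged into one kernel-verified Lean document; each statement's English description precedes it below -/
import Mathlib

section
/- For any two permutations π and σ of a finite set V, the Kendall-Tau distance d_τ(π,σ) (the number of pairs ordered differently by π and σ) is at most the Spearman Footrule distance d_F(π,σ) (the sum over elements of the absolute difference of their ranks), which in turn is at most twice the Kendall-Tau distance. -/
/-!
Count `d_F` as the number of pairs `(x, k)` with `k` in `[min (π x) (σ x), max (π x) (σ x))`.
An inversion `(u, v)` is sent to `(u, σ v)` if `π u ≤ σ v` and to `(v, π u)` otherwise; pairs of
the first kind have `π x < σ x` and those of the second `σ x < π x`, so the map is injective and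
`d_τ ≤ d_F`. Conversely, of the `σ x` elements below `x` in `σ` at most `π x` are below `x` in `π`,
so `σ x - π x` is at most the number of inversions starting at `x`; symmetrically `π x - σ x` is
at most the number of inversions ending at `x`, and summing over `x` gives `d_F ≤ 2 d_τ`.
-/

open Finset

/-- Kendall-Tau distance: number of (unordered) pairs ordered differently by π and σ,
counted via ordered pairs on which π increases and σ decreases. -/
def kendallTau {V : Type*} [Fintype V] [DecidableEq V] {n : ℕ} (π σ : V ≃ Fin n) : ℕ :=
  (Finset.univ.filter (fun p : V × V => π p.1 < π p.2 ∧ σ p.2 < σ p.1)).card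

/-- Spearman Footrule distance: sum of absolute rank differences. -/
def footrule {V : Type*} [Fintype V] {n : ℕ} (π σ : V ≃ Fin n) : ℕ :=
  ∑ u, ((π u : ℤ) - (σ u : ℤ)).natAbs

section

variable {V : Type*} [Fintype V] {n : ℕ}

theorem Equiv.card_filter_apply_lt (e : V ≃ Fin n) (x : V) : #{v | e v < e x} = e x := by
  rw [← Fin.card_Iio, ← card_map e.toEmbedding]
  congr 1
  ext k
  simp

theorem apply_le_apply_add_card_inversions [DecidableEq V] (π σ : V ≃ Fin n) (x : V) :
    (σ x : ℕ) ≤ π x + #{v | π x < π v ∧ σ v < σ x} := by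
  have hsub : ({v | σ v < σ x} : Finset V) ⊆
      ({v | π v < π x} : Finset V) ∪ ({v | π x < π v ∧ σ v < σ x} : Finset V) := by
    intro v hv
    simp only [mem_filter, mem_univ, true_and, mem_union] at hv ⊢
    have hne : π v ≠ π x := fun h => hv.ne (congrArg σ (π.injective h))
    rcases hne.lt_or_gt with h | h
    · exact .inl h
    · exact .inr ⟨h, hv⟩
  calc (σ x : ℕ) = #{v | σ v < σ x} := (σ.card_filter_apply_lt x).symm
    _ ≤ #{v | π v < π x} + #{v | π x < π v ∧ σ v < σ x} :=
      (card_le_card hsub).trans (card_union_le _ _)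
    _ = π x + #{v | π x < π v ∧ σ v < σ x} := by rw [π.card_filter_apply_lt]

theorem footrule_eq_card_sigma (π σ : V ≃ Fin n) :
    footrule π σ = #(univ.sigma fun x => Ico (min (π x) (σ x)) (max (π x) (σ x))) := by
  rw [card_sigma, footrule]
  refine sum_congr rfl fun x _ => ?_
  rw [Fin.card_Ico, Fin.coe_max, Fin.coe_min]
  omega

variable [DecidableEq V] (π σ : V ≃ Fin n)

theorem kendallTau_eq_sum_fst : kendallTau π σ = ∑ u, #{v | π u < π v ∧ σ v < σ u} := by
  simp only [kendallTau, card_filter, Fintype.sum_prod_type]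

theorem kendallTau_eq_sum_snd : kendallTau π σ = ∑ v, #{u | π u < π v ∧ σ v < σ u} := by
  simp only [kendallTau_eq_sum_fst, card_filter]
  exact sum_comm

theorem footrule_le_two_mul_kendallTau : footrule π σ ≤ 2 * kendallTau π σ := by
  rw [two_mul]
  nth_rw 1 [kendallTau_eq_sum_fst, kendallTau_eq_sum_snd]
  rw [← sum_add_distrib]
  refine sum_le_sum fun x _ => ?_
  have h₁ := apply_le_apply_add_card_inversions π σ x
  have h₂ := apply_le_apply_add_card_inversions σ π x
  simp only [and_comm (a := σ x < σ _)] at h₂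
  omega

theorem kendallTau_le_footrule : kendallTau π σ ≤ footrule π σ := by
  rw [footrule_eq_card_sigma]
  refine card_le_card_of_injOn
    (fun p => if π p.1 ≤ σ p.2 then ⟨p.1, σ p.2⟩ else ⟨p.2, π p.1⟩) ?_ ?_
  · rintro ⟨u, v⟩ huv
    simp only [coe_filter, mem_univ, true_and, Set.mem_ofPred_eq] at huv
    dsimp only
    split_ifs with h
    · exact mem_sigma.2 ⟨mem_univ _, mem_Ico.2 ⟨min_le_of_left_le h, lt_max_of_lt_right huv.2⟩⟩
    · exact mem_sigma.2
        ⟨mem_univ _, mem_Ico.2 ⟨min_le_of_right_le (not_le.1 h).le, lt_max_of_lt_left huv.1⟩⟩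
  · rintro ⟨u, v⟩ huv ⟨u', v'⟩ huv' heq
    simp only [coe_filter, mem_univ, true_and, Set.mem_ofPred_eq] at huv huv'
    dsimp only at heq
    split_ifs at heq with h h' h' <;> simp only [Sigma.mk.injEq, heq_eq_eq] at heq
    · obtain ⟨rfl, hv⟩ := heq
      rw [σ.injective hv]
    · obtain ⟨rfl, he⟩ := heq
      exact (lt_irrefl _ (((huv.2.trans (not_le.1 h')).trans_eq he.symm))).elim
    · obtain ⟨rfl, he⟩ := heq
      exact (lt_irrefl _ (((not_le.1 h).trans_eq he).trans huv'.2)).elim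
    · obtain ⟨rfl, hu⟩ := heq
      rw [π.injective hu]

end

theorem kendallTau_le_footrule_le_two_mul_kendallTau
    {V : Type*} [Fintype V] [DecidableEq V] {n : ℕ} (π σ : V ≃ Fin n) :
    kendallTau π σ ≤ footrule π σ ∧ footrule π σ ≤ 2 * kendallTau π σ :=
  ⟨kendallTau_le_footrule π σ, footrule_le_two_mul_kendallTau π σ⟩
end

section
/- The VC dimension of the class of permutations of an n-element set V, viewed as binary classifiers on unordered pairs (π classifies pair {u,v} by whether u precedes v under a fixed tie-breaking orientation), is at most n − 1. -/
private lemma perm_no_both {V : Type*} [Fintype V] [DecidableEq V]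
    (D : Finset (V × V))
    (hshatter : ∀ f : V × V → Bool, ∃ π : V ≃ Fin (Fintype.card V),
      ∀ p ∈ D, decide (π p.1 < π p.2) = f p)
    {a b : V} (h1 : (a, b) ∈ D) (h2 : (b, a) ∈ D) : False := by
  obtain ⟨π, hπ⟩ := hshatter (fun _ => true)
  have t1 := of_decide_eq_true (hπ _ h1)
  have t2 := of_decide_eq_true (hπ _ h2)
  exact absurd t2 (asymm t1)

private lemma min_degree_two_false {V : Type*} [Fintype V] [DecidableEq V]
    (D : Finset (V × V)) (hD : ∀ p ∈ D, p.1 ≠ p.2)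
    (hshatter : ∀ f : V × V → Bool, ∃ π : V ≃ Fin (Fintype.card V),
      ∀ p ∈ D, decide (π p.1 < π p.2) = f p)
    (hne : D.Nonempty)
    (hdeg : ∀ v u : V, ((u, v) ∈ D ∨ (v, u) ∈ D) →
      ∃ w, w ≠ u ∧ ((v, w) ∈ D ∨ (w, v) ∈ D)) : False := by
  classical
  obtain ⟨p₀, hp₀⟩ := hne
  -- choice function for next step
  have step : ∀ u v : V, ∃ w, ((u, v) ∈ D ∨ (v, u) ∈ D) →
      (w ≠ u ∧ ((v, w) ∈ D ∨ (w, v) ∈ D)) := by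
    intro u v
    by_cases h : (u, v) ∈ D ∨ (v, u) ∈ D
    · obtain ⟨w, hw⟩ := hdeg v u h
      exact ⟨w, fun _ => hw⟩
    · exact ⟨u, fun h' => absurd h' h⟩
  choose nxt hnxt using step
  -- the non-backtracking walk
  let g : ℕ → V × V := fun n => Nat.rec (p₀.1, p₀.2) (fun _ st => (st.2, nxt st.1 st.2)) n
  let x : ℕ → V := fun n => (g n).1
  have hx1 : ∀ n, x (n + 1) = (g n).2 := fun n => rfl
  have hx2 : ∀ n, x (n + 2) = nxt (x n) (x (n + 1)) := fun n => rfl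
  have adj : ∀ n, (x n, x (n + 1)) ∈ D ∨ (x (n + 1), x n) ∈ D := by
    intro n
    induction n with
    | zero => exact Or.inl hp₀
    | succ n ih =>
        have := (hnxt (x n) (x (n + 1)) ih).2
        rw [← hx2 n] at this
        exact this
  have nobt : ∀ n, x (n + 2) ≠ x n := by
    intro n
    have := (hnxt (x n) (x (n + 1)) (adj n)).1
    rw [← hx2 n] at this
    exact this
  have adjne : ∀ n, x n ≠ x (n + 1) := by
    intro n
    rcases adj n with h | h
    · exact hD _ h
    · exact (hD _ h).symm
  -- pigeonhole: a repeat exists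
  have hrep : ∃ j, ∃ i, i < j ∧ x i = x j := by
    have hninj : ¬ Function.Injective (fun k : Fin (Fintype.card V + 1) => x k) := by
      intro h
      have := Fintype.card_le_of_injective _ h
      simp at this
    rw [Function.not_injective_iff] at hninj
    obtain ⟨a, b, hab, hne'⟩ := hninj
    rcases lt_or_gt_of_ne (Fin.val_ne_of_ne hne') with h | h
    · exact ⟨b, a, h, hab⟩
    · exact ⟨a, b, h, hab.symm⟩
  let j₀ := Nat.find hrep
  obtain ⟨i, hij, hxij⟩ : ∃ i, i < j₀ ∧ x i = x j₀ := Nat.find_spec hrep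
  have inj_below : ∀ s t, s < t → t < j₀ → x s ≠ x t := by
    intro s t hst htj heq
    exact Nat.find_min hrep htj ⟨s, hst, heq⟩
  have injj : ∀ a b, i ≤ a → a < j₀ → i ≤ b → b < j₀ → x a = x b → a = b := by
    intro a b _ ha _ hb heq
    rcases lt_trichotomy a b with h | h | h
    · exact absurd heq (inj_below a b h hb)
    · exact h
    · exact absurd heq.symm (inj_below b a h ha)
  have gap : i + 3 ≤ j₀ := by
    have h1 : j₀ ≠ i + 1 := by
      intro h
      exact adjne i (h ▸ hxij)
    have h2 : j₀ ≠ i + 2 := by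
      intro h
      exact nobt i (h ▸ hxij).symm
    omega
  -- the cyclic orientation
  obtain ⟨π, hπ⟩ := hshatter
    (fun p => if ∃ t, i ≤ t ∧ t < j₀ ∧ p = (x t, x (t + 1)) then true else false)
  have incr : ∀ t, i ≤ t → t < j₀ → π (x t) < π (x (t + 1)) := by
    intro t hit htj
    rcases adj t with h | h
    · have := hπ _ h
      rw [if_pos ⟨t, hit, htj, rfl⟩] at this
      exact of_decide_eq_true this
    · have hf : ¬ ∃ s, i ≤ s ∧ s < j₀ ∧ ((x (t + 1), x t) : V × V) = (x s, x (s + 1)) := by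
        rintro ⟨s, his, hsj, heq⟩
        have e1 : x s = x (t + 1) := (Prod.mk.injEq _ _ _ _ ▸ heq).1.symm
        have e2 : x (s + 1) = x t := (Prod.mk.injEq _ _ _ _ ▸ heq).2.symm
        by_cases hc : t + 1 < j₀
        · have hs' : s = t + 1 := injj s (t + 1) his hsj (by omega) hc e1
          subst hs'
          by_cases hc2 : t + 2 < j₀
          · have := injj (t + 2) t (by omega) hc2 hit htj e2
            omega
          · -- t + 2 = j₀
            have ht2 : t + 2 = j₀ := by omega
            have : x (t + 2) = x i := by rw [ht2, ← hxij]
            have := injj t i hit htj le_rfl (by omega) (e2.symm.trans this)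
            omega
        · have ht1 : t + 1 = j₀ := by omega
          have e1' : x s = x i := by rw [e1, ht1, ← hxij]
          have hs' : s = i := injj s i his hsj le_rfl (by omega) e1'
          have e2' : x (i + 1) = x t := by rw [← hs']; exact e2
          have := injj (i + 1) t (by omega) (by omega) hit htj e2'
          omega
      have := hπ _ h
      rw [if_neg hf] at this
      have hlt : ¬ π (x (t + 1)) < π (x t) := of_decide_eq_false this
      have hne2 : π (x t) ≠ π (x (t + 1)) := fun hh => adjne t (π.injective hh)
      exact lt_of_le_of_ne (not_lt.mp hlt) hne2
  have mono : ∀ k, i ≤ k → k ≤ j₀ → π (x i) ≤ π (x k) := by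
    intro k
    induction k with
    | zero =>
        intro h1 _
        have : i = 0 := by omega
        rw [this]
    | succ k ih =>
        intro h1 h2
        rcases Nat.lt_or_ge i (k + 1) with h | h
        · have hik : i ≤ k := by omega
          exact le_trans (ih hik (by omega)) (le_of_lt (incr k hik (by omega)))
        · have : i = k + 1 := by omega
          rw [this]
  have hlast : π (x (j₀ - 1)) < π (x j₀) := by
    have := incr (j₀ - 1) (by omega) (by omega)
    have hh : j₀ - 1 + 1 = j₀ := by omega
    rwa [hh] at this
  have hle := mono (j₀ - 1) (by omega) (by omega)
  rw [← hxij] at hlast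
  exact absurd (lt_of_le_of_lt hle hlast) (lt_irrefl _)

private lemma support_bound {V : Type*} [Fintype V] [DecidableEq V] :
    ∀ (k : ℕ) (D : Finset (V × V)), D.card ≤ k → (∀ p ∈ D, p.1 ≠ p.2) →
    (∀ f : V × V → Bool, ∃ π : V ≃ Fin (Fintype.card V),
      ∀ p ∈ D, decide (π p.1 < π p.2) = f p) →
    D.Nonempty →
    D.card + 1 ≤ (D.biUnion fun p => {p.1, p.2}).card := by
  intro k
  induction k with
  | zero =>
      intro D hcard _ _ hne
      simp [Finset.card_eq_zero.mp (Nat.le_zero.mp hcard)] at hne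
  | succ k IH =>
      intro D hcard hD hs hne
      by_cases hdeg : ∀ v u : V, ((u, v) ∈ D ∨ (v, u) ∈ D) →
          ∃ w, w ≠ u ∧ ((v, w) ∈ D ∨ (w, v) ∈ D)
      · exact absurd (min_degree_two_false D hD hs hne hdeg) not_false
      · push_neg at hdeg
        obtain ⟨v, u, hadj, huniq⟩ := hdeg
        obtain ⟨p₀, hp₀D, hp₀⟩ : ∃ p₀ ∈ D, p₀ = (u, v) ∨ p₀ = (v, u) := by
          rcases hadj with h | h
          · exact ⟨(u, v), h, Or.inl rfl⟩
          · exact ⟨(v, u), h, Or.inr rfl⟩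
        -- every edge of D incident to v equals p₀
        have huniq' : ∀ q ∈ D, q.1 = v ∨ q.2 = v → q = p₀ := by
          intro q hq hqv
          have hex : ∃ a, ((v, a) ∈ D ∨ (a, v) ∈ D) ∧ (q = (v, a) ∨ q = (a, v)) := by
            rcases hqv with h | h
            · have hq' : q = (v, q.2) := by rw [← h]
              exact ⟨q.2, Or.inl (hq' ▸ hq), Or.inl hq'⟩
            · have hq' : q = (q.1, v) := by rw [← h]
              exact ⟨q.1, Or.inr (hq' ▸ hq), Or.inr hq'⟩
          obtain ⟨a, hav, hqa⟩ := hex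
          have hau : a = u := by
            by_contra hne'
            rcases hav with h' | h'
            · exact (huniq a hne').1 h'
            · exact (huniq a hne').2 h'
          subst hau
          rcases hqa with h1 | h1 <;> rcases hp₀ with h2 | h2
          · exact absurd (perm_no_both D hs (h1 ▸ hq) (h2 ▸ hp₀D)) not_false
          · rw [h1, h2]
          · rw [h1, h2]
          · exact absurd (perm_no_both D hs (h2 ▸ hp₀D) (h1 ▸ hq)) not_false
        have hsub : D.erase p₀ ⊆ D := Finset.erase_subset _ _
        have hcarde : (D.erase p₀).card = D.card - 1 := Finset.card_erase_of_mem hp₀D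
        have hDpos : 1 ≤ D.card := Finset.card_pos.mpr hne
        by_cases hD'ne : (D.erase p₀).Nonempty
        · have ih := IH (D.erase p₀) (by omega) (fun p hp => hD p (hsub hp))
            (fun f => by
              obtain ⟨π, hπ⟩ := hs f
              exact ⟨π, fun p hp => hπ p (hsub hp)⟩) hD'ne
          have hv_not : v ∉ (D.erase p₀).biUnion fun p => {p.1, p.2} := by
            simp only [Finset.mem_biUnion, Finset.mem_insert, Finset.mem_singleton]
            rintro ⟨q, hq, hqv⟩
            have := huniq' q (hsub hq) (by tauto)
            exact (Finset.ne_of_mem_erase hq) this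
          have hvmem : v ∈ D.biUnion fun p => {p.1, p.2} := by
            simp only [Finset.mem_biUnion, Finset.mem_insert, Finset.mem_singleton]
            refine ⟨p₀, hp₀D, ?_⟩
            rcases hp₀ with h | h <;> rw [h] <;> simp
          have hsubsup : ((D.erase p₀).biUnion fun p => {p.1, p.2}) ⊆
              (D.biUnion fun p => {p.1, p.2}).erase v := by
            intro w hw
            refine Finset.mem_erase.mpr ⟨fun h => hv_not (h ▸ hw), ?_⟩
            exact Finset.biUnion_subset_biUnion_of_subset_left _ hsub hw
          have h1 := Finset.card_le_card hsubsup
          rw [Finset.card_erase_of_mem hvmem] at h1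
          have h3 : 1 ≤ (D.biUnion fun p => {p.1, p.2}).card :=
            Finset.card_pos.mpr ⟨v, hvmem⟩
          omega
        · have hDsing : D = {p₀} := by
            apply Finset.eq_singleton_iff_unique_mem.mpr
            refine ⟨hp₀D, fun q hq => ?_⟩
            by_contra hqp
            exact hD'ne ⟨q, Finset.mem_erase.mpr ⟨hqp, hq⟩⟩
          rw [hDsing]
          simp only [Finset.card_singleton, Finset.singleton_biUnion]
          rw [Finset.card_pair (hD p₀ hp₀D)]

/-- The VC dimension of permutations of an n-element set, viewed as binary classifiers
on pairs via the precedence predicate, is at most n - 1: any shattered set of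
(non-diagonal) pairs has cardinality at most n - 1. -/
theorem vc_dim_permutations_le {V : Type*} [Fintype V] [DecidableEq V]
    (D : Finset (V × V)) (hD : ∀ p ∈ D, p.1 ≠ p.2)
    (hshatter : ∀ f : V × V → Bool, ∃ π : V ≃ Fin (Fintype.card V),
      ∀ p ∈ D, decide (π p.1 < π p.2) = f p) :
    D.card ≤ Fintype.card V - 1 := by
  rcases D.eq_empty_or_nonempty with h | h
  · simp [h]
  · have hb := support_bound D.card D le_rfl hD hshatter h
    have hsub : (D.biUnion fun p => {p.1, p.2}) ⊆ Finset.univ := Finset.subset_univ _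
    have hle := Finset.card_le_card hsub
    rw [Finset.card_univ] at hle
    omega
end

section
/- If π is a permutation of V and v ∈ V with i ≥ rank_π(v), then the decrease in MFAST cost from moving v to position i equals Σ over u with rank_π(u) ∈ [rank_π(v)+1, i] of (W(u,v) − W(v,u)); that is, C(π,V,W) − C(π_{v→i},V,W) = Σ_{u : rank_π(u) ∈ [rank_π(v)+1, i]} (W(u,v) − W(v,u)). -/
open Finset

set_option linter.unusedSectionVars false
set_option linter.unusedVariables false

section
variable {V : Type*} [Fintype V] [DecidableEq V] {n : ℕ}

lemma rank_card (e : V ≃ Fin n) (u : V) :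
    (univ.filter fun w => e w < e u).card = (e u : ℕ) := by
  have himg : (univ.filter fun w => e w < e u).image e
      = univ.filter fun j : Fin n => j < e u := by
    ext j
    simp only [mem_image, mem_filter, mem_univ, true_and]
    constructor
    · rintro ⟨w, hw, rfl⟩; exact hw
    · intro hj; exact ⟨e.symm j, by simpa using hj, by simp⟩
  have hc := Finset.card_image_of_injective (univ.filter fun w => e w < e u) e.injective
  rw [himg] at hc
  rw [← hc]
  have : (univ.filter fun j : Fin n => j < e u) = Finset.Iio (e u) := by
    ext j; simp
  rw [this, Fin.card_Iio]

lemma card_split (e : V ≃ Fin n) (u v : V) :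
    (e u : ℕ) = (univ.filter fun w => w ≠ v ∧ e w < e u).card
      + (if e v < e u then 1 else 0) := by
  rw [← rank_card e u]
  have h1 : (univ.filter fun w => w ≠ v ∧ e w < e u)
      = (univ.erase v).filter fun w => e w < e u := by
    ext w; simp [mem_erase, and_comm]
  rw [h1, Finset.card_filter, Finset.card_filter,
    ← Finset.sum_erase_add _ _ (mem_univ v)]

lemma key_iff {π σ : V ≃ Fin n} {v : V} {i : Fin n}
    (hi : (π v : ℕ) ≤ (i : ℕ)) (hmove : σ v = i)
    (horder : ∀ u w : V, u ≠ v → w ≠ v → (π u < π w ↔ σ u < σ w))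
    {u : V} (hu : u ≠ v) :
    ((σ u : ℕ) < (i : ℕ) ↔ (π u : ℕ) ≤ (i : ℕ)) := by
  have hπ := card_split π u v
  have hσ := card_split σ u v
  have hsets : (univ.filter fun w => w ≠ v ∧ σ w < σ u)
      = univ.filter fun w => w ≠ v ∧ π w < π u := by
    ext w; simp only [mem_filter, mem_univ, true_and]
    exact and_congr_right fun hw => (horder w u hw hu).symm
  rw [hsets, hmove] at hσ
  have hne : (σ u : ℕ) ≠ (i : ℕ) := by
    rw [← hmove]
    simp only [ne_eq, Fin.val_eq_val, EmbeddingLike.apply_eq_iff_eq]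
    exact hu
  have hne2 : (π u : ℕ) ≠ (π v : ℕ) := by
    simp only [ne_eq, Fin.val_eq_val, EmbeddingLike.apply_eq_iff_eq]
    exact hu
  simp only [Fin.lt_def] at hπ hσ
  by_cases h1 : (i : ℕ) < (σ u : ℕ) <;> by_cases h2 : (π v : ℕ) < (π u : ℕ) <;>
    simp only [h1, h2, if_true, if_false] at hπ hσ <;> omega
end


/-- MFAST cost: number of pairs whose W-preference disagrees with the order of π. -/
def mfastCost {V : Type*} [Fintype V] [DecidableEq V] {n : ℕ}
    (W : V → V → ℕ) (π : V ≃ Fin n) : ℕ :=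
  ∑ p ∈ Finset.univ.filter (fun p : V × V => π p.1 < π p.2), W p.2 p.1

/-- TestMove identity: if σ = π_{v→i} (v moved to rank i, other elements keeping their
relative order) and i ≥ rank_π(v), then
C(π) - C(σ) = Σ_{u : rank_π(u) ∈ [rank_π(v)+1, i]} (W(u,v) - W(v,u)). -/
theorem cost_sub_cost_move_eq {V : Type*} [Fintype V] [DecidableEq V] {n : ℕ}
    (W : V → V → ℕ) (hW : ∀ u v : V, u ≠ v → W u v + W v u = 1)
    (π σ : V ≃ Fin n) (v : V) (i : Fin n)
    (hi : (π v : ℕ) ≤ (i : ℕ))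
    (hmove : σ v = i)
    (horder : ∀ u w : V, u ≠ v → w ≠ v → (π u < π w ↔ σ u < σ w)) :
    (mfastCost W π : ℤ) - (mfastCost W σ : ℤ) =
      ∑ u ∈ Finset.univ.filter (fun u : V => π v < π u ∧ (π u : ℕ) ≤ (i : ℕ)),
        ((W u v : ℤ) - (W v u : ℤ)) := by
  set g : V → V → ℤ := fun a b =>
    (if π a < π b then (W b a : ℤ) else 0) - (if σ a < σ b then (W b a : ℤ) else 0) with hg
  -- Step A
  have hA : (mfastCost W π : ℤ) - (mfastCost W σ : ℤ)
      = ∑ a : V, ∑ b : V, g a b := by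
    have hcost : ∀ e : V ≃ Fin n, (mfastCost W e : ℤ)
        = ∑ p : V × V, (if e p.1 < e p.2 then (W p.2 p.1 : ℤ) else 0) := by
      intro e
      rw [mfastCost, Nat.cast_sum, Finset.sum_filter]
    rw [hcost π, hcost σ, ← Finset.sum_sub_distrib, Fintype.sum_prod_type]
  rw [hA]
  -- g vanishes off the cross
  have hzero : ∀ a b : V, a ≠ v → b ≠ v → g a b = 0 := by
    intro a b ha hb
    simp only [hg]
    rw [if_congr (horder a b ha hb) rfl rfl, sub_self]
  have hgvv : g v v = 0 := by simp [hg]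
  -- Step B
  have hB : ∑ a : V, ∑ b : V, g a b = ∑ u ∈ univ.erase v, (g u v + g v u) := by
    have hinner : ∀ a : V, ∑ b : V, g a b = (∑ b ∈ univ.erase v, g a b) + g a v :=
      fun a => (Finset.sum_erase_add _ _ (mem_univ v)).symm
    calc ∑ a : V, ∑ b : V, g a b
        = ∑ a : V, ((∑ b ∈ univ.erase v, g a b) + g a v) := by
          exact Finset.sum_congr rfl fun a _ => hinner a
      _ = (∑ a : V, ∑ b ∈ univ.erase v, g a b) + ∑ a : V, g a v := by
          rw [Finset.sum_add_distrib]
      _ = ((∑ a ∈ univ.erase v, ∑ b ∈ univ.erase v, g a b) + ∑ b ∈ univ.erase v, g v b)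
          + ((∑ a ∈ univ.erase v, g a v) + g v v) := by
          have e1 : (∑ a ∈ univ.erase v, ∑ b ∈ univ.erase v, g a b) + (∑ b ∈ univ.erase v, g v b)
              = ∑ a : V, ∑ b ∈ univ.erase v, g a b :=
            Finset.sum_erase_add univ _ (mem_univ v)
          have e2 : (∑ a ∈ univ.erase v, g a v) + g v v = ∑ a : V, g a v :=
            Finset.sum_erase_add univ _ (mem_univ v)
          rw [e1, e2]
      _ = (∑ b ∈ univ.erase v, g v b) + ∑ a ∈ univ.erase v, g a v := by
          rw [hgvv]
          have : ∑ a ∈ univ.erase v, ∑ b ∈ univ.erase v, g a b = 0 := by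
            apply Finset.sum_eq_zero; intro a ha
            apply Finset.sum_eq_zero; intro b hb
            exact hzero a b (Finset.ne_of_mem_erase ha) (Finset.ne_of_mem_erase hb)
          rw [this]; ring
      _ = ∑ u ∈ univ.erase v, (g u v + g v u) := by
          rw [Finset.sum_add_distrib]; ring
  rw [hB]
  -- Step C : per-term computation
  have hterm : ∀ u ∈ univ.erase v,
      g u v + g v u = if π v < π u ∧ (π u : ℕ) ≤ (i : ℕ)
        then ((W u v : ℤ) - (W v u : ℤ)) else 0 := by
    intro u hu
    have huv : u ≠ v := Finset.ne_of_mem_erase hu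
    have hk := key_iff hi hmove horder huv
    have hne : (σ u : ℕ) ≠ (i : ℕ) := by
      rw [← hmove]
      simp only [ne_eq, Fin.val_eq_val, EmbeddingLike.apply_eq_iff_eq]
      exact huv
    have hne2 : (π u : ℕ) ≠ (π v : ℕ) := by
      simp only [ne_eq, Fin.val_eq_val, EmbeddingLike.apply_eq_iff_eq]
      exact huv
    have h1 : (σ u < σ v) ↔ (π u : ℕ) ≤ (i : ℕ) := by
      rw [hmove, Fin.lt_def]; exact hk
    have h2 : (σ v < σ u) ↔ ¬ ((π u : ℕ) ≤ (i : ℕ)) := by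
      rw [hmove, Fin.lt_def, ← hk]; omega
    simp only [hg]
    by_cases hA2 : π v < π u <;> by_cases hA3 : (π u : ℕ) ≤ (i : ℕ)
    · have e1 : ¬ (π u < π v) := by simp only [Fin.lt_def] at hA2 ⊢; omega
      have e2 : σ u < σ v := h1.mpr hA3
      have e4 : ¬ (σ v < σ u) := by rw [h2]; omega
      simp only [e1, e2, e4, hA2, hA3, and_self, if_true, if_false, ite_true, ite_false,
        if_neg, if_pos]
      ring
    · have e1 : ¬ (π u < π v) := by simp only [Fin.lt_def] at hA2 ⊢; omega
      have e2 : ¬ (σ u < σ v) := by rw [h1]; omega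
      have e4 : σ v < σ u := h2.mpr hA3
      have e5 : ¬ (π v < π u ∧ (π u : ℕ) ≤ (i : ℕ)) := by tauto
      simp only [e1, e2, e4, hA2, e5, if_true, if_false, ite_true, ite_false]
      simp [hA3]
    · have e1 : π u < π v := by
        simp only [Fin.lt_def] at hA2 ⊢; omega
      have e2 : σ u < σ v := h1.mpr hA3
      have e4 : ¬ (σ v < σ u) := by rw [h2]; omega
      have e5 : ¬ (π v < π u ∧ (π u : ℕ) ≤ (i : ℕ)) := by tauto
      simp only [e1, e2, e4, hA2, e5, if_true, if_false, ite_true, ite_false]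
      simp
    · exfalso
      simp only [Fin.lt_def] at hA2
      omega
  rw [Finset.sum_congr rfl hterm, ← Finset.sum_filter]
  apply Finset.sum_congr _ fun _ _ => rfl
  ext u
  simp only [mem_filter, mem_erase, mem_univ, true_and, and_true]
  constructor
  · rintro ⟨_, h⟩; exact h
  · rintro ⟨h1, h2⟩
    refine ⟨?_, h1, h2⟩
    intro h; subst h; exact lt_irrefl _ h1
end

section
/- Moving an element v from its position to position i in a permutation changes the MFAST cost by at most |i − rank_π(v)| in absolute value: |C(π,V,W) − C(π_{v→i},V,W)| ≤ |i − rank_π(v)|. -/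
open Finset

section Aux

variable {V : Type*} [Fintype V] [DecidableEq V] {n : ℕ}

lemma downclosed_subset (π : V ≃ Fin n) (v : V) (A B : Finset V)
    (hvA : v ∉ A) (hvB : v ∉ B)
    (hA : ∀ u ∈ A, ∀ w, w ≠ v → π w < π u → w ∈ A)
    (hB : ∀ u ∈ B, ∀ w, w ≠ v → π w < π u → w ∈ B)
    (h : A.card ≤ B.card) : A ⊆ B := by
  intro u hu
  by_contra hub
  have huv : u ≠ v := fun e => hvA (e ▸ hu)
  have hBA : B ⊆ A.erase u := by
    intro w hw
    have hwv : w ≠ v := fun e => hvB (e ▸ hw)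
    have hwu : π w < π u := by
      rcases lt_trichotomy (π w) (π u) with h1 | h1 | h1
      · exact h1
      · have : w = u := π.injective h1
        exact absurd (this ▸ hw) hub
      · exact absurd (hB w hw u huv h1) hub
    exact Finset.mem_erase.mpr ⟨fun e => absurd (e ▸ hwu) (lt_irrefl _),
      hA u hu w hwv hwu⟩
  have h2 := Finset.card_le_card hBA
  rw [Finset.card_erase_of_mem hu] at h2
  have hApos : 0 < A.card := Finset.card_pos.mpr ⟨u, hu⟩
  omega

lemma card_filter_lt (π : V ≃ Fin n) (v : V) :
    (univ.filter fun u => π u < π v).card = (π v : ℕ) := by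
  have : (univ.filter fun u => π u < π v) = (Finset.Iio (π v)).map π.symm.toEmbedding := by
    ext u
    simp only [Finset.mem_filter, Finset.mem_univ, true_and, Finset.mem_map,
      Finset.mem_Iio, Equiv.coe_toEmbedding]
    constructor
    · intro h; exact ⟨π u, h, π.symm_apply_apply u⟩
    · rintro ⟨j, hj, rfl⟩; simpa using hj
  rw [this, Finset.card_map, Fin.card_Iio]

end Aux

/-- Moving an element v to position i changes the MFAST cost by at most
|i - rank_π(v)| in absolute value. -/
theorem abs_cost_sub_cost_move_le {V : Type*} [Fintype V] [DecidableEq V] {n : ℕ}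
    (W : V → V → ℕ) (hW : ∀ u v : V, u ≠ v → W u v + W v u = 1)
    (π σ : V ≃ Fin n) (v : V) (i : Fin n)
    (hmove : σ v = i)
    (horder : ∀ u w : V, u ≠ v → w ≠ v → (π u < π w ↔ σ u < σ w)) :
    |(mfastCost W π : ℤ) - (mfastCost W σ : ℤ)| ≤ |(i : ℤ) - ((π v : ℕ) : ℤ)| := by
  classical
  set g : V → V → ℤ := fun a b =>
    (if π a < π b then (W b a : ℤ) else 0) - (if σ a < σ b then (W b a : ℤ) else 0) with hg
  -- g vanishes off pairs involving v
  have hzero : ∀ a b : V, a ≠ v → b ≠ v → g a b = 0 := by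
    intro a b ha hb
    have h := horder a b ha hb
    by_cases hs : σ a < σ b
    · simp [hg, hs, h.mpr hs]
    · simp [hg, hs, mt h.mp hs]
  have hgvv : g v v = 0 := by simp [hg]
  -- cost difference as a sum over pairs
  have hcostπ : (mfastCost W π : ℤ)
      = ∑ p : V × V, if π p.1 < π p.2 then (W p.2 p.1 : ℤ) else 0 := by
    unfold mfastCost
    push_cast
    rw [Finset.sum_filter]
  have hcostσ : (mfastCost W σ : ℤ)
      = ∑ p : V × V, if σ p.1 < σ p.2 then (W p.2 p.1 : ℤ) else 0 := by
    unfold mfastCost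
    push_cast
    rw [Finset.sum_filter]
  have hdiff : (mfastCost W π : ℤ) - (mfastCost W σ : ℤ) = ∑ p : V × V, g p.1 p.2 := by
    rw [hcostπ, hcostσ, ← Finset.sum_sub_distrib]
  have hsum2 : ∑ p : V × V, g p.1 p.2 = ∑ a : V, ∑ b : V, g a b := by
    rw [Fintype.sum_prod_type]
  -- collapse to pairs involving v
  have hinner : ∀ a : V, a ≠ v → ∑ b : V, g a b = g a v := by
    intro a ha
    apply Finset.sum_eq_single v
    · intro b _ hb; exact hzero a b ha hb
    · intro h; exact absurd (Finset.mem_univ v) h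
  have hmain : (mfastCost W π : ℤ) - (mfastCost W σ : ℤ) = ∑ u : V, (g u v + g v u) := by
    rw [hdiff, hsum2, ← Finset.sum_erase_add _ _ (Finset.mem_univ v)]
    rw [Finset.sum_congr rfl (fun a ha => hinner a (Finset.ne_of_mem_erase ha))]
    rw [Finset.sum_add_distrib]
    congr 1
    exact Finset.sum_erase _ hgvv
  -- pointwise bound
  have hpt : ∀ u : V, |g u v + g v u| ≤
      (if ¬ ((π u < π v) ↔ (σ u < σ v)) then (1 : ℤ) else 0) := by
    intro u
    by_cases huv : u = v
    · subst huv
      simp [hgvv]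
    · have hw := hW u v huv
      have hπne : π u ≠ π v := fun e => huv (π.injective e)
      have hσne : σ u ≠ σ v := fun e => huv (σ.injective e)
      by_cases hp : π u < π v <;> by_cases hs : σ u < σ v
      · have hp' : ¬ π v < π u := by omega
        have hs' : ¬ σ v < σ u := by omega
        simp [hg, hp, hs, hp', hs']
      · have hp' : ¬ π v < π u := by omega
        have hs' : σ v < σ u := by
          rcases lt_or_gt_of_ne hσne with h | h
          · exact absurd h hs
          · exact h
        simp only [hg, if_pos hp, if_neg hs, if_neg hp', if_pos hs']
        rw [if_pos (show ¬ _ from fun h => hs (h.mp hp))]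
        rw [abs_le]
        omega
      · have hp' : π v < π u := by
          rcases lt_or_gt_of_ne hπne with h | h
          · exact absurd h hp
          · exact h
        have hs' : ¬ σ v < σ u := by omega
        simp only [hg, if_neg hp, if_pos hs, if_pos hp', if_neg hs']
        rw [if_pos (show ¬ _ from fun h => hp (h.mpr hs))]
        rw [abs_le]
        omega
      · have hp' : π v < π u := by
          rcases lt_or_gt_of_ne hπne with h | h
          · exact absurd h hp
          · exact h
        have hs' : σ v < σ u := by
          rcases lt_or_gt_of_ne hσne with h | h
          · exact absurd h hs
          · exact h
        simp [hg, hp, hs, hp', hs']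
  -- the sets A and B
  set A : Finset V := univ.filter (fun u => π u < π v) with hAdef
  set B : Finset V := univ.filter (fun u => σ u < σ v) with hBdef
  have hcardA : A.card = (π v : ℕ) := card_filter_lt π v
  have hcardB : B.card = (i : ℕ) := by rw [hBdef, card_filter_lt σ v, hmove]
  have hvA : v ∉ A := by simp [hAdef]
  have hvB : v ∉ B := by simp [hBdef]
  have hA : ∀ u ∈ A, ∀ w, w ≠ v → π w < π u → w ∈ A := by
    intro u hu w _ hwu
    simp only [hAdef, Finset.mem_filter, Finset.mem_univ, true_and] at hu ⊢
    exact hwu.trans hu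
  have hB : ∀ u ∈ B, ∀ w, w ≠ v → π w < π u → w ∈ B := by
    intro u hu w hwv hwu
    simp only [hBdef, Finset.mem_filter, Finset.mem_univ, true_and] at hu ⊢
    have huv : u ≠ v := fun e => by
      subst e; exact absurd hu (lt_irrefl _)
    exact ((horder w u hwv huv).mp hwu).trans hu
  -- sum of indicators equals card of symmetric difference
  have hfset : (univ.filter fun u => ¬ ((π u < π v) ↔ (σ u < σ v)))
      = (A \ B) ∪ (B \ A) := by
    ext u
    simp only [hAdef, hBdef, Finset.mem_filter, Finset.mem_univ, true_and,
      Finset.mem_union, Finset.mem_sdiff]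
    tauto
  have hsumind : ∑ u : V, (if ¬ ((π u < π v) ↔ (σ u < σ v)) then (1 : ℤ) else 0)
      = (((A \ B) ∪ (B \ A)).card : ℤ) := by
    rw [Finset.sum_boole, hfset]
  -- put it together
  have hbound : |(mfastCost W π : ℤ) - (mfastCost W σ : ℤ)|
      ≤ (((A \ B) ∪ (B \ A)).card : ℤ) := by
    rw [hmain, ← hsumind]
    exact (Finset.abs_sum_le_sum_abs _ _).trans (Finset.sum_le_sum fun u _ => hpt u)
  refine hbound.trans ?_
  rcases le_or_gt A.card B.card with hc | hc
  · have hsub : A ⊆ B := downclosed_subset π v A B hvA hvB hA hB hc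
    have h1 : A \ B = ∅ := Finset.sdiff_eq_empty_iff_subset.mpr hsub
    have h2 : (B \ A).card = B.card - A.card := Finset.card_sdiff_of_subset hsub
    rw [h1, Finset.empty_union, h2, hcardA, hcardB]
    rw [abs_of_nonneg (by omega)]
    omega
  · have hsub : B ⊆ A := downclosed_subset π v B A hvB hvA hB hA hc.le
    have h1 : B \ A = ∅ := Finset.sdiff_eq_empty_iff_subset.mpr hsub
    have h2 : (A \ B).card = A.card - B.card := Finset.card_sdiff_of_subset hsub
    rw [h1, Finset.union_empty, h2, hcardA, hcardB]
    rw [hcardA, hcardB] at hc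
    rw [abs_of_nonpos (by omega)]
    omega
end

section
/- Suppose the fractional packing number of nontransitive triangles is at least C(π*,V,W)/3, i.e., there exist nonnegative weights β_t on nontransitive triangles t such that for every pair (u,v) with W(u,v)=1, the sum of β_t over triangles t containing (u,v) is at most 1, and Σ_t β_t ≥ C(π*,V,W)/3. Then any feasible solution (w, ξ) of SVM1 satisfies Σ_{u,v} ξ_{u,v} ≥ C(π*,V,W), where π* is the MFAST-optimal permutation. -/
open Finset
open scoped RealInnerProductSpace

/-- If nontransitive triangles admit a fractional packing of total weight at least
C(π*,V,W)/3, then any feasible solution of the ranking SVM (SVM1) has total slack at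
least C(π*,V,W), where π* is the MFAST-optimal permutation. -/
theorem svm_objective_ge_opt_cost {V : Type*} [Fintype V] [DecidableEq V]
    {n : ℕ} {E : Type*} [NormedAddCommGroup E] [InnerProductSpace ℝ E]
    (W : V → V → ℕ) (hW : ∀ a b : V, a ≠ b → W a b + W b a = 1)
    (hWd : ∀ a : V, W a a = 0)
    (φ : V → E) (w : E) (ξ : V → V → ℝ)
    (hfeas : ∀ u v : V, W u v = 1 → ⟪w, φ u⟫ - ⟪w, φ v⟫ ≥ 1 - ξ u v)
    (hpos : ∀ u v : V, 0 ≤ ξ u v)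
    (πstar : V ≃ Fin n) (hopt : ∀ π : V ≃ Fin n, mfastCost W πstar ≤ mfastCost W π)
    (T : Finset (V × V × V))
    (hT : ∀ t : V × V × V, t ∈ T ↔ (W t.1 t.2.1 = 1 ∧ W t.2.1 t.2.2 = 1 ∧ W t.2.2 t.1 = 1))
    (β : V × V × V → ℝ) (hβ : ∀ t, 0 ≤ β t)
    (hpack : ∀ u v : V, W u v = 1 →
      ∑ t ∈ T.filter (fun t : V × V × V =>
          (t.1 = u ∧ t.2.1 = v) ∨ (t.2.1 = u ∧ t.2.2 = v) ∨ (t.2.2 = u ∧ t.1 = v)), β t ≤ 1)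
    (hsum : (mfastCost W πstar : ℝ) / 3 ≤ ∑ t ∈ T, β t) :
    (mfastCost W πstar : ℝ) ≤ ∑ u : V, ∑ v : V, ξ u v := by
  classical
  set S : Finset (V × V) := Finset.univ.filter (fun p : V × V => W p.1 p.2 = 1) with hS
  have hslack : ∀ t ∈ T, (3:ℝ) ≤ ξ t.1 t.2.1 + ξ t.2.1 t.2.2 + ξ t.2.2 t.1 := by
    intro t ht
    obtain ⟨h1, h2, h3⟩ := (hT t).mp ht
    have a1 := hfeas _ _ h1
    have a2 := hfeas _ _ h2
    have a3 := hfeas _ _ h3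
    linarith
  have key : ∀ t ∈ T, β t * 3 ≤ ∑ p ∈ S.filter (fun p : V × V =>
      (t.1 = p.1 ∧ t.2.1 = p.2) ∨ (t.2.1 = p.1 ∧ t.2.2 = p.2) ∨ (t.2.2 = p.1 ∧ t.1 = p.2)),
      β t * ξ p.1 p.2 := by
    intro t ht
    obtain ⟨h1, h2, h3⟩ := (hT t).mp ht
    have huv : t.1 ≠ t.2.1 := by
      intro h; rw [← h] at h1; rw [hWd] at h1; exact one_ne_zero h1.symm
    have hvy : t.2.1 ≠ t.2.2 := by
      intro h; rw [← h] at h2; rw [hWd] at h2; exact one_ne_zero h2.symm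
    have hyu : t.2.2 ≠ t.1 := by
      intro h; rw [← h] at h3; rw [hWd] at h3; exact one_ne_zero h3.symm
    have hset : S.filter (fun p : V × V =>
        (t.1 = p.1 ∧ t.2.1 = p.2) ∨ (t.2.1 = p.1 ∧ t.2.2 = p.2) ∨ (t.2.2 = p.1 ∧ t.1 = p.2))
        = {(t.1, t.2.1), (t.2.1, t.2.2), (t.2.2, t.1)} := by
      ext p
      simp only [hS, Finset.mem_filter, Finset.mem_univ, true_and, Finset.mem_insert,
        Finset.mem_singleton, Prod.ext_iff]
      constructor
      · rintro ⟨hp, h⟩; tauto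
      · intro h
        refine ⟨?_, by tauto⟩
        rcases h with ⟨a, b⟩ | ⟨a, b⟩ | ⟨a, b⟩ <;> rw [a, b] <;> assumption
    have hm1 : ((t.1, t.2.1) : V × V) ∉ ({(t.2.1, t.2.2), (t.2.2, t.1)} : Finset (V × V)) := by
      simp only [Finset.mem_insert, Finset.mem_singleton, Prod.ext_iff]
      push_neg
      exact ⟨fun h => absurd h huv, fun _ h2 => huv h2.symm⟩
    have hm2 : ((t.2.1, t.2.2) : V × V) ∉ ({(t.2.2, t.1)} : Finset (V × V)) := by
      simp only [Finset.mem_singleton, Prod.ext_iff]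
      intro h; exact hvy h.1
    rw [hset, Finset.sum_insert hm1, Finset.sum_insert hm2, Finset.sum_singleton]
    have := hslack t ht
    nlinarith [hβ t]
  have step2 : ∑ t ∈ T, β t * 3 ≤ ∑ p ∈ S, (∑ t ∈ T.filter (fun t : V × V × V =>
      (t.1 = p.1 ∧ t.2.1 = p.2) ∨ (t.2.1 = p.1 ∧ t.2.2 = p.2) ∨ (t.2.2 = p.1 ∧ t.1 = p.2)),
      β t) * ξ p.1 p.2 := by
    calc ∑ t ∈ T, β t * 3
        ≤ ∑ t ∈ T, ∑ p ∈ S.filter (fun p : V × V =>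
            (t.1 = p.1 ∧ t.2.1 = p.2) ∨ (t.2.1 = p.1 ∧ t.2.2 = p.2) ∨ (t.2.2 = p.1 ∧ t.1 = p.2)),
            β t * ξ p.1 p.2 := Finset.sum_le_sum key
      _ = ∑ t ∈ T, ∑ p ∈ S, if (t.1 = p.1 ∧ t.2.1 = p.2) ∨ (t.2.1 = p.1 ∧ t.2.2 = p.2)
            ∨ (t.2.2 = p.1 ∧ t.1 = p.2) then β t * ξ p.1 p.2 else 0 := by
          simp [Finset.sum_filter]
      _ = ∑ p ∈ S, ∑ t ∈ T, if (t.1 = p.1 ∧ t.2.1 = p.2) ∨ (t.2.1 = p.1 ∧ t.2.2 = p.2)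
            ∨ (t.2.2 = p.1 ∧ t.1 = p.2) then β t * ξ p.1 p.2 else 0 := Finset.sum_comm
      _ = ∑ p ∈ S, ∑ t ∈ T.filter (fun t : V × V × V =>
            (t.1 = p.1 ∧ t.2.1 = p.2) ∨ (t.2.1 = p.1 ∧ t.2.2 = p.2) ∨ (t.2.2 = p.1 ∧ t.1 = p.2)),
            β t * ξ p.1 p.2 := by
          simp [Finset.sum_filter]
      _ = ∑ p ∈ S, (∑ t ∈ T.filter (fun t : V × V × V =>
            (t.1 = p.1 ∧ t.2.1 = p.2) ∨ (t.2.1 = p.1 ∧ t.2.2 = p.2) ∨ (t.2.2 = p.1 ∧ t.1 = p.2)),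
            β t) * ξ p.1 p.2 := by
          simp [Finset.sum_mul]
  have step3 : ∑ p ∈ S, (∑ t ∈ T.filter (fun t : V × V × V =>
      (t.1 = p.1 ∧ t.2.1 = p.2) ∨ (t.2.1 = p.1 ∧ t.2.2 = p.2) ∨ (t.2.2 = p.1 ∧ t.1 = p.2)),
      β t) * ξ p.1 p.2 ≤ ∑ p ∈ S, ξ p.1 p.2 := by
    apply Finset.sum_le_sum
    intro p hp
    have hpW : W p.1 p.2 = 1 := by
      simpa [hS] using hp
    have := hpack p.1 p.2 hpW
    have h0 : (0:ℝ) ≤ ξ p.1 p.2 := hpos _ _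
    nlinarith
  have step4 : ∑ p ∈ S, ξ p.1 p.2 ≤ ∑ p : V × V, ξ p.1 p.2 :=
    Finset.sum_le_sum_of_subset_of_nonneg (Finset.filter_subset _ _)
      (fun p _ _ => hpos _ _)
  have step5 : ∑ p : V × V, ξ p.1 p.2 = ∑ u : V, ∑ v : V, ξ u v := by
    rw [Fintype.sum_prod_type]
  have hmul : (∑ t ∈ T, β t) * 3 = ∑ t ∈ T, β t * 3 := by rw [Finset.sum_mul]
  linarith
end
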